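/- arXiv:1206.6201 — 3 statements merged into one kernel-verified Lean document; each statement's English description precedes it below -/
import Mathlib

section
/- For every graph G = (V,E) with at least one edge, the graph C(G) obtained from the gadget construction is a caterpillar whose maximum degree is at most 3. -/
/-- Vertices of the caterpillar `C(G)` built from a graph with `m` enumerated edges:
backbone positions `0, …, 5m` (gadget `i` occupies positions `5i, …, 5i+5`, consecutive
gadgets sharing an endpoint), together with two hairs per gadget
(`(i, false) = h₃ⁱ` and `(i, true) = h₄ⁱ`). -/
abbrev CatV (m : ℕ) := Fin (5 * m + 1) ⊕ (Fin m × Bool)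

/-- Base adjacency relation of the caterpillar: consecutive backbone vertices are adjacent,
hair `h₃ⁱ` is adjacent (only) to position `5i+2` (`= b₃ⁱ`), and hair `h₄ⁱ` is adjacent
(only) to position `5i+3` (`= b₄ⁱ`). -/
def catRel (m : ℕ) : CatV m → CatV m → Prop
  | .inl p, .inl q => (q : ℕ) = (p : ℕ) + 1
  | .inr (i, h), .inl p => (p : ℕ) = 5 * (i : ℕ) + (if h then 3 else 2)
  | _, _ => False

/-- The caterpillar `C(G)` (as a graph). -/
def catGraph (m : ℕ) : SimpleGraph (CatV m) := SimpleGraph.fromRel (catRel m)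

/-- A graph is a path graph if its vertices can be enumerated as `v_0, …, v_{n-1}` with
two vertices adjacent iff they are consecutive in the enumeration. -/
def IsPathGraph {α : Type*} (G : SimpleGraph α) : Prop :=
  ∃ (n : ℕ) (e : Fin n ≃ α),
    ∀ i j : Fin n, G.Adj (e i) (e j) ↔ ((i : ℕ) + 1 = (j : ℕ) ∨ (j : ℕ) + 1 = (i : ℕ))

/-- A connected graph is a caterpillar if its vertex set can be partitioned into a set `B`
inducing a path and a set of remaining vertices each of which has exactly one neighbor,
which lies in `B`. -/
def IsCaterpillar {α : Type*} (G : SimpleGraph α) : Prop :=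
  G.Connected ∧ ∃ B : Set α, IsPathGraph (G.induce B) ∧
    ∀ v : α, v ∉ B → ∃ u ∈ B, G.Adj v u ∧ ∀ w : α, G.Adj v w → w = u

/-!
The backbone positions form a copy of `pathGraph (5m+1)`, and every hair is adjacent exactly to
its anchor, the backbone position `5i+2` or `5i+3` it hangs from. So the graph is connected and
a caterpillar with the backbone as `B`. Distinct hairs have distinct anchors, hence a backbone
vertex has at most two backbone neighbours and one hair.
-/

open SimpleGraph Sum

def catHairAnchor {m : ℕ} (a : Fin m × Bool) : Fin (5 * m + 1) :=
  ⟨5 * a.1 + if a.2 then 3 else 2, by have := a.1.isLt; split <;> omega⟩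

lemma catHairAnchor_injective (m : ℕ) : Function.Injective (catHairAnchor (m := m)) := by
  rintro ⟨i, h⟩ ⟨j, h'⟩ hij
  have hval : 5 * (i : ℕ) + (if h then 3 else 2) = 5 * j + (if h' then 3 else 2) :=
    congrArg Fin.val hij
  obtain rfl : h = h' := by cases h <;> cases h' <;> simp at hval ⊢ <;> omega
  simpa [Fin.val_inj] using hval

lemma isPathGraph_induce_range {α : Type*} {G : SimpleGraph α} {n : ℕ}
    (φ : pathGraph n ↪g G) : IsPathGraph (G.induce (Set.range φ)) :=
  ⟨n, Equiv.ofInjective φ φ.injective, fun i j => by simp [pathGraph_adj]⟩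

section
variable {m : ℕ}

lemma catGraph_adj_inl_inl {p q : Fin (5 * m + 1)} :
    (catGraph m).Adj (inl p) (inl q) ↔ (p : ℕ) + 1 = q ∨ (q : ℕ) + 1 = p := by
  simp only [catGraph, fromRel_adj, catRel, ne_eq, inl.injEq]
  constructor
  · rintro ⟨-, h⟩
    omega
  · intro h
    exact ⟨by rintro rfl; omega, by omega⟩

lemma catGraph_adj_inr {a : Fin m × Bool} {y : CatV m} :
    (catGraph m).Adj (inr a) y ↔ y = inl (catHairAnchor a) := by
  obtain ⟨i, h⟩ := a
  rcases y with q | ⟨j, h'⟩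
  · simp [catGraph, catRel, catHairAnchor, Fin.ext_iff]
  · simp [catGraph, catRel]

lemma catGraph_neighborSet_inr (a : Fin m × Bool) :
    (catGraph m).neighborSet (inr a) = {inl (catHairAnchor a)} :=
  Set.ext fun _ => catGraph_adj_inr

lemma catGraph_neighborSet_inl_subset (p : Fin (5 * m + 1)) :
    (catGraph m).neighborSet (inl p) ⊆
      inl '' (Fin.val ⁻¹' {(p : ℕ) - 1, (p : ℕ) + 1}) ∪
        inr '' (catHairAnchor ⁻¹' {p}) := by
  rintro (q | a) hq
  · have := catGraph_adj_inl_inl.1 hq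
    exact Or.inl ⟨q, by simp only [Set.mem_preimage, Set.mem_insert_iff,
      Set.mem_singleton_iff]; omega, rfl⟩
  · exact Or.inr ⟨a, (inl_injective (catGraph_adj_inr.1 hq.symm)).symm, rfl⟩

end

def catBackbone (m : ℕ) : pathGraph (5 * m + 1) ↪g catGraph m where
  toEmbedding := Function.Embedding.inl
  map_rel_iff' := by
    intro p q
    simp [catGraph_adj_inl_inl, pathGraph_adj]

lemma catGraph_connected (m : ℕ) : (catGraph m).Connected := by
  have hback : ∀ p q, (catGraph m).Reachable (inl p) (inl q) := fun p q =>
    ((pathGraph_connected _).preconnected p q).map (catBackbone m).toHom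
  have hanchor : ∀ x, ∃ p, (catGraph m).Reachable x (inl p) := by
    rintro (p | a)
    · exact ⟨p, .rfl⟩
    · exact ⟨_, (catGraph_adj_inr.2 rfl).reachable⟩
  refine connected_iff _ |>.2 ⟨fun x y => ?_, ⟨inl 0⟩⟩
  obtain ⟨p, hx⟩ := hanchor x
  obtain ⟨q, hy⟩ := hanchor y
  exact hx.trans ((hback p q).trans hy.symm)

lemma catGraph_isCaterpillar (m : ℕ) : IsCaterpillar (catGraph m) := by
  refine ⟨catGraph_connected m, Set.range (catBackbone m), isPathGraph_induce_range _, ?_⟩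
  rintro (p | a) hv
  · exact absurd ⟨p, rfl⟩ hv
  · exact ⟨inl (catHairAnchor a), ⟨_, rfl⟩, catGraph_adj_inr.2 rfl,
      fun _ => catGraph_adj_inr.1⟩

lemma catGraph_ncard_neighborSet_le_three {m : ℕ} (x : CatV m) :
    ((catGraph m).neighborSet x).ncard ≤ 3 := by
  rcases x with p | a
  · set S : Set (Fin (5 * m + 1)) := Fin.val ⁻¹' {(p : ℕ) - 1, (p : ℕ) + 1}
    set T : Set (Fin m × Bool) := catHairAnchor ⁻¹' {p}
    have hS : S.ncard ≤ 2 :=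
      (Set.ncard_le_ncard_of_injOn Fin.val (fun _ h => h) Fin.val_injective.injOn
        (Set.toFinite ({(p : ℕ) - 1, (p : ℕ) + 1} : Set ℕ))).trans
        ((Set.ncard_insert_le _ _).trans (by rw [Set.ncard_singleton]))
    have hT : T.ncard ≤ 1 := Set.ncard_le_one_iff_subsingleton.2
      (Set.subsingleton_singleton.preimage (catHairAnchor_injective m))
    calc ((catGraph m).neighborSet (inl p)).ncard
        ≤ (inl '' S ∪ inr '' T).ncard := Set.ncard_le_ncard (catGraph_neighborSet_inl_subset p)
      _ ≤ (inl '' S).ncard + (inr '' T).ncard := Set.ncard_union_le _ _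
      _ = S.ncard + T.ncard := by
          rw [Set.ncard_image_of_injective _ inl_injective,
            Set.ncard_image_of_injective _ inr_injective]
      _ ≤ 3 := by omega
  · simp [catGraph_neighborSet_inr]

theorem catGraph_isCaterpillar_maxDegree_le_three_general
    (m : ℕ) :
    IsCaterpillar (catGraph m) ∧
      ∀ x : CatV m, ((catGraph m).neighborSet x).ncard ≤ 3 :=
  ⟨catGraph_isCaterpillar m, catGraph_ncard_neighborSet_le_three⟩

/-- For every graph `G` with at least one edge (its `m` edges being
enumerated by `ε`), the graph `C(G)` of the gadget construction is a caterpillar whose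
maximum degree is at most `3`. -/
theorem catGraph_isCaterpillar_maxDegree_le_three
    {V : Type*} [Fintype V] [DecidableEq V]
    (G : SimpleGraph V) (m : ℕ) (ε : ℕ → V × V)
    (hadj : ∀ i < m, G.Adj (ε i).1 (ε i).2)
    (hsurj : ∀ u v : V, G.Adj u v → ∃ i < m, s((ε i).1, (ε i).2) = s(u, v))
    (hinj : ∀ i < m, ∀ j < m, s((ε i).1, (ε i).2) = s((ε j).1, (ε j).2) → i = j)
    (hedge : ∃ u v : V, G.Adj u v) :
    IsCaterpillar (catGraph m) ∧
      ∀ x : CatV m, ((catGraph m).neighborSet x).ncard ≤ 3 :=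
  catGraph_isCaterpillar_maxDegree_le_three_general m
end

section
/- Let G be a connected precolored graph and c a color such that the set V_c of vertices of color c is nonempty, the subgraph of G induced by V_c is connected, and every vertex of G either has color c or has a neighbor of color c. Let S be the set of colors different from c that appear on some vertex of G. Then the free flooding game on G has a solution of length |S|. -/
open scoped Classical

/-- The set of vertices colored (and merged) by a coloring operation at `v`:
`v` together with all vertices in the same connected component as `v` in the
subgraph induced by the vertices of color `col v`. -/
def floodRegion {V C : Type*} (G : SimpleGraph V) (col : V → C) (v : V) : Set V :=
  {u | ∃ p : G.Walk v u, ∀ w ∈ p.support, col w = col v}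

/-- The coloring operation `(v, c)`. -/
noncomputable def floodStep {V C : Type*} (G : SimpleGraph V) (col : V → C)
    (v : V) (c : C) : V → C :=
  fun u => if u ∈ floodRegion G col v then c else col u

/-- Applying a sequence of coloring operations. -/
noncomputable def floodSeq {V C : Type*} (G : SimpleGraph V) (col : V → C) :
    List (V × C) → V → C
  | [] => col
  | op :: ops => floodSeq G (floodStep G col op.1 op.2) ops

/-- A sequence of coloring operations is a solution of the free flooding game if
applying it makes all vertices of `G` have the same color. -/
def IsFloodSolution {V C : Type*} (G : SimpleGraph V) (col : V → C)
    (ops : List (V × C)) : Prop :=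
  ∃ c : C, ∀ u : V, floodSeq G col ops u = c

/-!
Flood repeatedly from a fixed vertex `v` of color `c`, using each other occurring color once.
The color class of `v` only grows, and a superset of a connected dominating vertex set is again
connected and dominating (each new vertex hangs on the old set by an edge). Hence every operation
recolors exactly the class of `v`, and after it one fewer color other than that of `v` occurs.
-/

namespace SimpleGraph

variable {V : Type*} (G : SimpleGraph V)

def IsConnectedDominating (s : Set V) : Prop :=
  (G.induce s).Connected ∧ ∀ v, v ∈ s ∨ ∃ w, G.Adj v w ∧ w ∈ s

variable {G}

lemma IsConnectedDominating.mono {s t : Set V} (hs : G.IsConnectedDominating s) (hst : s ⊆ t) :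
    G.IsConnectedDominating t := by
  refine ⟨?_, fun v => (hs.2 v).imp (@hst v) fun ⟨w, hvw, hw⟩ => ⟨w, hvw, hst hw⟩⟩
  obtain ⟨⟨u, hu⟩⟩ := hs.1.nonempty
  refine G.induce_connected_of_patches u (hst hu) fun {v} hv => ?_
  rcases hs.2 v with hvs | ⟨w, hvw, hws⟩
  · exact ⟨s, hst, hu, hvs, hs.1.preconnected _ _⟩
  · have hconn : (G.induce (s ∪ {w, v})).Connected :=
      induce_union_connected hs.1.preconnected (induce_pair_connected_of_adj hvw.symm).preconnected
        ⟨w, hws, Set.mem_insert w _⟩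
    refine ⟨s ∪ {w, v}, ?_, Or.inl hu, Or.inr (by simp), hconn.preconnected _ _⟩
    simp only [Set.union_subset_iff, Set.insert_subset_iff, Set.singleton_subset_iff]
    exact ⟨hst, hst hws, hv⟩

end SimpleGraph

section Flooding

open SimpleGraph

variable {V C : Type*} {G : SimpleGraph V} {col : V → C} {v : V}

lemma floodRegion_subset (G : SimpleGraph V) (col : V → C) (v : V) :
    floodRegion G col v ⊆ {u | col u = col v} :=
  fun _ ⟨p, hp⟩ => hp _ p.end_mem_support

lemma floodRegion_eq_of_connected (h : (G.induce {u | col u = col v}).Connected) :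
    floodRegion G col v = {u | col u = col v} := by
  refine (floodRegion_subset G col v).antisymm fun u hu => ?_
  obtain ⟨q⟩ := h ⟨v, rfl⟩ ⟨u, hu⟩
  have hq : ∀ w ∈ (q.map (Embedding.induce _).toHom).support, col w = col v := by
    simp only [Walk.support_map, List.forall_mem_map]
    exact fun w _ => w.2
  exact ⟨_, hq⟩

lemma floodStep_eq_of_connected (h : (G.induce {u | col u = col v}).Connected) (e : C) :
    floodStep G col v e = fun u => if col u = col v then e else col u := by
  funext u
  simp only [floodStep, floodRegion_eq_of_connected h, Set.mem_ofPred_eq]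

lemma isConnectedDominating_floodStep (h : G.IsConnectedDominating {u | col u = col v}) (e : C) :
    G.IsConnectedDominating {u | floodStep G col v e u = floodStep G col v e v} := by
  refine h.mono fun u hu => ?_
  simp only [floodStep_eq_of_connected h.1, Set.mem_ofPred_eq] at hu ⊢
  simp [hu]

lemma range_floodStep_sdiff (h : (G.induce {u | col u = col v}).Connected) (e : C) :
    Set.range (floodStep G col v e) \ {floodStep G col v e v} =
      (Set.range col \ {col v}) \ {e} := by
  ext c'
  simp only [floodStep_eq_of_connected h, Set.mem_sdiff, Set.mem_range,
    Set.mem_singleton_iff]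
  constructor
  · rintro ⟨⟨u, rfl⟩, hne⟩
    by_cases hu : col u = col v <;> simp_all
  · rintro ⟨⟨⟨u, rfl⟩, hne⟩, hne'⟩
    exact ⟨⟨u, by simp [hne]⟩, hne'⟩

theorem exists_isFloodSolution_of_isConnectedDominating [Finite V]
    (h : G.IsConnectedDominating {u | col u = col v}) :
    ∃ ops : List (V × C),
      ops.length = (Set.range col \ {col v}).ncard ∧ IsFloodSolution G col ops := by
  induction hn : (Set.range col \ {col v}).ncard generalizing col with
  | zero =>
    refine ⟨[], rfl, col v, fun u => ?_⟩
    rw [Set.ncard_eq_zero, Set.sdiff_eq_empty] at hn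
    exact hn ⟨u, rfl⟩
  | succ n ih =>
    obtain ⟨e, he⟩ := Set.nonempty_of_ncard_ne_zero (s := Set.range col \ {col v}) (by omega)
    have hn' : (Set.range (floodStep G col v e) \ {floodStep G col v e v}).ncard = n := by
      have := Set.ncard_sdiff_singleton_add_one he
      rw [range_floodStep_sdiff h.1]
      omega
    obtain ⟨ops, hlen, hsol⟩ := ih (isConnectedDominating_floodStep h e) hn'
    exact ⟨(v, e) :: ops, by simp [hlen], hsol⟩

end Flooding

theorem flood_solution_of_connected_dominating_color_general
    {V C : Type*} [Fintype V] (G : SimpleGraph V)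
    (col : V → C) (c : C)
    (hne : {v : V | col v = c}.Nonempty)
    (hconn : (G.induce {v : V | col v = c}).Connected)
    (hdom : ∀ v : V, col v = c ∨ ∃ u : V, G.Adj v u ∧ col u = c) :
    ∃ ops : List (V × C),
      ops.length = {c' : C | c' ≠ c ∧ ∃ v : V, col v = c'}.ncard ∧
      IsFloodSolution G col ops := by
  obtain ⟨v, rfl⟩ := hne
  have hcolors : {c' : C | c' ≠ col v ∧ ∃ u : V, col u = c'} = Set.range col \ {col v} := by
    ext c'
    simp [and_comm]
  rw [hcolors]
  exact exists_isFloodSolution_of_isConnectedDominating ⟨hconn, hdom⟩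

/-- If `G` is a connected precolored graph and `c` a color such that the
set of vertices of color `c` is nonempty, induces a connected subgraph, and dominates
`G` (every vertex has color `c` or a neighbor of color `c`), then the free flooding
game on `G` has a solution whose length is the number of colors different from `c`
that appear on some vertex of `G`. -/
theorem flood_solution_of_connected_dominating_color
    {V C : Type*} [Fintype V] (G : SimpleGraph V) (hG : G.Connected)
    (col : V → C) (c : C)
    (hne : {v : V | col v = c}.Nonempty)
    (hconn : (G.induce {v : V | col v = c}).Connected)
    (hdom : ∀ v : V, col v = c ∨ ∃ u : V, G.Adj v u ∧ col u = c) :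
    ∃ ops : List (V × C),
      ops.length = {c' : C | c' ≠ c ∧ ∃ v : V, col v = c'}.ncard ∧
      IsFloodSolution G col ops :=
  flood_solution_of_connected_dominating_color_general G col c hne hconn hdom
end

section
/- Let G be a connected precolored split graph whose vertex set is partitioned into a nonempty clique K and an independent set I, precolored with at most k colors. Then the free flooding game on G has a solution of length at most 2k in which every coloring operation recolors a vertex of K: it first makes all vertices of K have the same color and then changes the color of the clique to absorb the vertices of I. -/
open scoped Classical

/-!
Repeatedly recoloring one clique vertex `v` through every color of the initial coloring
grows its flood region by every vertex that is adjacent to the region and carries one of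
these colors at the moment its turn comes. One pass from a vertex of the clique absorbs
the whole clique; since the recolorings never introduce new colors, a second pass absorbs
every vertex of the independent set, each of which has a neighbor in the clique.
-/

namespace SimpleGraph

section Flooding

variable {V C : Type*} (G : SimpleGraph V) (col : V → C)

lemma mem_floodRegion_self (v : V) : v ∈ floodRegion G col v :=
  ⟨Walk.nil, by simp⟩

variable {G col}

lemma color_eq_of_mem_floodRegion {v u : V} (h : u ∈ floodRegion G col v) :
    col u = col v :=
  h.elim fun p hp => hp u p.end_mem_support

lemma mem_floodRegion_of_adj {v w u : V} (hw : w ∈ floodRegion G col v) (hadj : G.Adj w u)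
    (hu : col u = col v) : u ∈ floodRegion G col v := by
  obtain ⟨p, hp⟩ := hw
  refine ⟨p.concat hadj, fun x hx => ?_⟩
  rw [Walk.support_concat, List.mem_append, List.mem_singleton] at hx
  rcases hx with hx | rfl
  exacts [hp x hx, hu]

lemma floodStep_apply_of_not_mem {v u : V} {c : C} (h : u ∉ floodRegion G col v) :
    floodStep G col v c u = col u :=
  if_neg h

lemma floodRegion_subset_floodStep (v : V) (c : C) :
    floodRegion G col v ⊆ floodRegion G (floodStep G col v c) v := by
  rintro u ⟨p, hp⟩
  have hsupp : ∀ w ∈ p.support, w ∈ floodRegion G col v := fun w hw =>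
    ⟨p.takeUntil w hw, fun x hx => hp x (p.support_takeUntil_subset_support hw hx)⟩
  refine ⟨p, fun w hw => ?_⟩
  simp only [floodStep, if_pos (hsupp w hw), if_pos (mem_floodRegion_self G col v)]

lemma floodSeq_append (l₁ l₂ : List (V × C)) :
    floodSeq G col (l₁ ++ l₂) = floodSeq G (floodSeq G col l₁) l₂ := by
  induction l₁ generalizing col with
  | nil => rfl
  | cons op l ih => exact ih

lemma floodSeq_apply_mem {S : Set C} (hcol : ∀ u, col u ∈ S) {ops : List (V × C)}
    (hops : ∀ op ∈ ops, op.2 ∈ S) (u : V) : floodSeq G col ops u ∈ S := by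
  induction ops generalizing col with
  | nil => exact hcol u
  | cons op ops ih =>
    refine ih (fun x => ?_) (fun op' h => hops op' (List.mem_cons_of_mem op h))
    unfold floodStep
    split_ifs
    exacts [hops op List.mem_cons_self, hcol x]

end Flooding

def floodOpsAt {V C : Type*} (v : V) (cs : List C) : List (V × C) :=
  cs.map (v, ·)

section FloodOpsAt

variable {V C : Type*} {G : SimpleGraph V} {col : V → C}

lemma floodRegion_subset_floodSeq_floodOpsAt (v : V) (cs : List C) :
    floodRegion G col v ⊆ floodRegion G (floodSeq G col (floodOpsAt v cs)) v := by
  induction cs generalizing col with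
  | nil => exact subset_rfl
  | cons c cs ih => exact (floodRegion_subset_floodStep v c).trans ih

lemma mem_floodRegion_floodSeq_floodOpsAt_of_adj {v w u : V} {cs : List C}
    (hw : w ∈ floodRegion G col v) (hadj : G.Adj w u) (hu : col u ∈ cs) :
    u ∈ floodRegion G (floodSeq G col (floodOpsAt v cs)) v := by
  induction cs generalizing col with
  | nil => cases hu
  | cons c cs ih =>
    by_cases hmem : u ∈ floodRegion G col v
    · exact floodRegion_subset_floodSeq_floodOpsAt v (c :: cs) hmem
    have hw' := floodRegion_subset_floodStep v c hw
    have hcol_u : floodStep G col v c u = col u := floodStep_apply_of_not_mem hmem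
    rcases List.mem_cons.mp hu with rfl | hu
    · -- `u` has the color just given to `v`, and joins the region right away
      refine floodRegion_subset_floodSeq_floodOpsAt (G := G) v cs ?_
      refine mem_floodRegion_of_adj hw' hadj ?_
      simp only [floodStep, if_neg hmem, if_pos (mem_floodRegion_self G col v)]
    · exact ih hw' (hcol_u ▸ hu)

end FloodOpsAt

lemma exists_adj_mem_of_not_mem {V : Type*} {G : SimpleGraph V} (hG : G.Preconnected)
    {K I : Set V} (hunion : K ∪ I = Set.univ) (hindep : ∀ u ∈ I, ∀ w ∈ I, ¬ G.Adj u w)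
    {u v : V} (hv : v ∈ K) (hu : u ∉ K) : ∃ w ∈ K, G.Adj u w := by
  have mem_I {x : V} (hx : x ∉ K) : x ∈ I :=
    ((Set.ext_iff.mp hunion x).mpr trivial).resolve_left hx
  obtain ⟨p⟩ := hG u v
  have hadj : G.Adj u p.snd := Walk.adj_snd (Walk.not_nil_of_ne (ne_of_mem_of_not_mem hv hu).symm)
  by_cases hsnd : p.snd ∈ K
  · exact ⟨_, hsnd, hadj⟩
  · exact absurd hadj (hindep u (mem_I hu) _ (mem_I hsnd))

end SimpleGraph

open SimpleGraph

theorem splitGraph_flood_solution_le_two_k_general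
    {V C : Type*} [Fintype V] (G : SimpleGraph V) (hG : G.Connected)
    (col : V → C) (K I : Set V)
    (hunion : K ∪ I = Set.univ)
    (hKne : K.Nonempty)
    (hclique : G.IsClique K)
    (hindep : ∀ u ∈ I, ∀ w ∈ I, ¬ G.Adj u w)
    (k : ℕ) (hk : (Set.range col).ncard ≤ k) :
    ∃ ops₁ ops₂ : List (V × C),
      (ops₁ ++ ops₂).length ≤ 2 * k ∧
      (∀ op ∈ ops₁ ++ ops₂, op.1 ∈ K) ∧
      (∃ c : C, ∀ v ∈ K, floodSeq G col ops₁ v = c) ∧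
      IsFloodSolution G col (ops₁ ++ ops₂) := by
  obtain ⟨v₀, hv₀⟩ := hKne
  set cs := (Finset.univ.image col).toList
  have hcs (u : V) : col u ∈ cs := by simp [cs]
  have hlen : cs.length ≤ k := by
    rw [Finset.length_toList, ← Set.ncard_coe_finset]
    simpa using hk
  set ops := floodOpsAt v₀ cs
  set col₁ := floodSeq G col ops
  have hK : K ⊆ floodRegion G col₁ v₀ := by
    intro u hu
    obtain rfl | huv := eq_or_ne u v₀
    · exact floodRegion_subset_floodSeq_floodOpsAt u cs (mem_floodRegion_self G col u)
    · exact mem_floodRegion_floodSeq_floodOpsAt_of_adj (mem_floodRegion_self G col v₀)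
        (hclique hv₀ hu (Ne.symm huv)) (hcs u)
  have hall (u : V) : u ∈ floodRegion G (floodSeq G col₁ ops) v₀ := by
    by_cases hu : u ∈ K
    · exact floodRegion_subset_floodSeq_floodOpsAt v₀ cs (hK hu)
    obtain ⟨w, hw, hadj⟩ := exists_adj_mem_of_not_mem hG.preconnected hunion hindep hv₀ hu
    exact mem_floodRegion_floodSeq_floodOpsAt_of_adj (hK hw) hadj.symm
      (floodSeq_apply_mem (S := {c | c ∈ cs}) hcs (by simp [ops, floodOpsAt]) u)
  refine ⟨ops, ops, ?_, ?_, ⟨col₁ v₀, fun v hv => color_eq_of_mem_floodRegion (hK hv)⟩,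
    ⟨floodSeq G col₁ ops v₀, fun u => ?_⟩⟩
  · simpa [ops, floodOpsAt, two_mul] using Nat.add_le_add hlen hlen
  · simpa [ops, floodOpsAt] using fun _ _ => hv₀
  · rw [floodSeq_append]
    exact color_eq_of_mem_floodRegion (hall u)

/-- Let `G` be a connected precolored split graph whose vertex set is
partitioned into a nonempty clique `K` and an independent set `I`, precolored with at
most `k` colors. Then the free flooding game on `G` has a solution of length at most
`2k` in which every coloring operation recolors a vertex of `K`: it first makes all
vertices of `K` have the same color, and then changes the color of the clique to
absorb the vertices of `I`. -/
theorem splitGraph_flood_solution_le_two_k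
    {V C : Type*} [Fintype V] (G : SimpleGraph V) (hG : G.Connected)
    (col : V → C) (K I : Set V)
    (hunion : K ∪ I = Set.univ) (hdisj : Disjoint K I)
    (hKne : K.Nonempty)
    (hclique : G.IsClique K)
    (hindep : ∀ u ∈ I, ∀ w ∈ I, ¬ G.Adj u w)
    (k : ℕ) (hk : (Set.range col).ncard ≤ k) :
    ∃ ops₁ ops₂ : List (V × C),
      (ops₁ ++ ops₂).length ≤ 2 * k ∧
      (∀ op ∈ ops₁ ++ ops₂, op.1 ∈ K) ∧
      (∃ c : C, ∀ v ∈ K, floodSeq G col ops₁ v = c) ∧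
      IsFloodSolution G col (ops₁ ++ ops₂) :=
  splitGraph_flood_solution_le_two_k_general G hG col K I hunion hKne hclique hindep k hk
end
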